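/- arXiv:2407.05757 — 3 statements merged into one kernel-verified Lean document; each statement's English description precedes it below -/
import Mathlib

section
/- Let d be a pseudo metric with finite jump size s on a weighted graph, x₀ ∈ G, 0 < δ < 1, R > 0, and define η(x) = min{ [R - s - d(x₀,x)]₊ / (δR), 1 }. Then for all x, y ∈ G with ω(x,y) > 0, |η(y) - η(x)| ≤ (1/(δR)) d(x,y), and moreover η(y) = η(x) unless (1-δ)R - 2s < d(x,x₀) ≤ R, i.e. |η(y)-η(x)| ≤ (1/(δR)) d(x,y) χ_{{(1-δ)R-2s < d(x,x₀) ≤ R}}(x). -/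
theorem abs_min_sub_min_le_abs' (a b c : ℝ) : |min a c - min b c| ≤ |a - b| := by
  simpa only [sub_self, abs_zero, max_eq_left (abs_nonneg (a - b))]
    using abs_min_sub_min_le_max a c b c

/-- Lemma 4.4, first inequality: Lipschitz estimate for the cut-off function
`η(x) = min ([R - s - d(x₀,x)]₊ / (δR), 1)`. -/
theorem cutoff_gradient_bound {G : Type*} (μ : G → ℝ) (ω d : G → G → ℝ)
    (hμ : ∀ x, 0 < μ x) (hω_nonneg : ∀ x y, 0 ≤ ω x y)
    (hω_symm : ∀ x y, ω x y = ω y x) (hω_diag : ∀ x, ω x x = 0)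
    (hd_nonneg : ∀ x y, 0 ≤ d x y) (hd_self : ∀ x, d x x = 0)
    (hd_symm : ∀ x y, d x y = d y x)
    (hd_tri : ∀ x y z, d x y ≤ d x z + d z y)
    (s : ℝ) (hs : 0 ≤ s) (hjump : ∀ x y, 0 < ω x y → d x y ≤ s)
    (x₀ : G) (δ R : ℝ) (hδ0 : 0 < δ) (hδ1 : δ < 1) (hR : 0 < R)
    (x y : G) (hxy : 0 < ω x y) :
    |(min (max (R - s - d x₀ y) 0 / (δ * R)) 1)
      - (min (max (R - s - d x₀ x) 0 / (δ * R)) 1)|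
      ≤ (1 / (δ * R)) * d x y *
        Set.indicator {z : G | (1 - δ) * R - 2 * s < d z x₀ ∧ d z x₀ ≤ R}
          (fun _ => (1 : ℝ)) x := by
  have hδR : 0 < δ * R := mul_pos hδ0 hR
  have hdxy : d x y ≤ s := hjump x y hxy
  have hdxy0 : 0 ≤ d x y := hd_nonneg x y
  by_cases hx : x ∈ {z : G | (1 - δ) * R - 2 * s < d z x₀ ∧ d z x₀ ≤ R}
  · rw [Set.indicator_of_mem hx]
    have h1 : |(min (max (R - s - d x₀ y) 0 / (δ * R)) 1)
        - (min (max (R - s - d x₀ x) 0 / (δ * R)) 1)|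
        ≤ |max (R - s - d x₀ y) 0 / (δ * R) - max (R - s - d x₀ x) 0 / (δ * R)| :=
      abs_min_sub_min_le_abs' _ _ _
    have h2 : |max (R - s - d x₀ y) 0 / (δ * R) - max (R - s - d x₀ x) 0 / (δ * R)|
        = |max (R - s - d x₀ y) 0 - max (R - s - d x₀ x) 0| / (δ * R) := by
      rw [div_sub_div_same, abs_div, abs_of_pos hδR]
    have h3 : |max (R - s - d x₀ y) 0 - max (R - s - d x₀ x) 0|
        ≤ |(R - s - d x₀ y) - (R - s - d x₀ x)| := abs_max_sub_max_le_abs _ _ _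
    have h4 : |(R - s - d x₀ y) - (R - s - d x₀ x)| = |d x₀ x - d x₀ y| := by
      ring_nf
    have h5 : |d x₀ x - d x₀ y| ≤ d x y := by
      rw [abs_sub_le_iff]
      constructor
      · have := hd_tri x₀ x y; rw [hd_symm y x] at this; linarith
      · have := hd_tri x₀ y x; linarith
    calc |(min (max (R - s - d x₀ y) 0 / (δ * R)) 1)
        - (min (max (R - s - d x₀ x) 0 / (δ * R)) 1)|
        ≤ |d x₀ x - d x₀ y| / (δ * R) := by
          rw [← h4]; refine h1.trans ?_; rw [h2]
          exact div_le_div_of_nonneg_right h3 hδR.le |>.trans_eq rfl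
      _ ≤ d x y / (δ * R) := by exact div_le_div_of_nonneg_right h5 hδR.le
      _ = 1 / (δ * R) * d x y * 1 := by ring
  · rw [Set.indicator_of_notMem hx, mul_zero]
    simp only [Set.mem_setOf_eq, not_and_or, not_lt] at hx
    have : min (max (R - s - d x₀ y) 0 / (δ * R)) 1
        = min (max (R - s - d x₀ x) 0 / (δ * R)) 1 := by
      rcases hx with hx | hx
      · -- d x x₀ ≤ (1-δ)R - 2s : both equal 1
        rw [hd_symm x x₀] at hx
        have hxv : (1:ℝ) ≤ max (R - s - d x₀ x) 0 / (δ * R) := by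
          rw [le_div_iff₀ hδR, one_mul]
          have : δ * R ≤ R - s - d x₀ x := by nlinarith
          exact this.trans (le_max_left _ _)
        have hyv : (1:ℝ) ≤ max (R - s - d x₀ y) 0 / (δ * R) := by
          rw [le_div_iff₀ hδR, one_mul]
          have hty : d x₀ y ≤ d x₀ x + d x y := hd_tri x₀ y x |>.trans_eq (by rw [hd_symm x y])
          have : δ * R ≤ R - s - d x₀ y := by nlinarith
          exact this.trans (le_max_left _ _)
        rw [min_eq_right hxv, min_eq_right hyv]
      · -- R < d x x₀ : both equal 0
        rw [hd_symm x x₀] at hx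
        have hxv : max (R - s - d x₀ x) 0 = 0 := max_eq_right (by linarith)
        have hty : d x₀ x ≤ d x₀ y + d x y := (hd_tri x₀ x y).trans_eq (by rw [hd_symm y x])
        have hyv : max (R - s - d x₀ y) 0 = 0 := max_eq_right (by nlinarith)
        rw [hxv, hyv]
    rw [this, sub_self, abs_zero]
end

section
/- Let d be a 1-intrinsic pseudo metric with bound C₀ (i.e. Σ_y ω(x,y) d(x,y) ≤ C₀ μ(x)) and finite jump size s, k > s, β > 0, ζ_β(x) = [d(x,x₀)+k]^(-β). Then Δζ_β(x) ≤ C₀ β [d(x,x₀)+k-s]^(-β-1) for every x ∈ G. -/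
/-- The weighted graph Laplacian. -/
noncomputable def graphLap {G : Type*} (μ : G → ℝ) (ω : G → G → ℝ) (f : G → ℝ) (x : G) : ℝ :=
  (μ x)⁻¹ * ∑' y, ω x y * (f y - f x)

/-- Mean value inequality for `t ↦ t ^ (-β)` on `[a, b]`. -/
lemma rpow_neg_sub_le (β : ℝ) (hβ : 0 < β) {a b : ℝ} (ha : 0 < a) (hab : a < b) :
    a ^ (-β) - b ^ (-β) ≤ β * a ^ (-β - 1) * (b - a) := by
  obtain ⟨c, hc, hderiv⟩ := exists_hasDerivAt_eq_slope (fun t => t ^ (-β))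
    (fun t => -β * t ^ (-β - 1)) hab
    (fun t ht => (Real.continuousAt_rpow_const t (-β)
      (Or.inl (ne_of_gt (lt_of_lt_of_le ha ht.1)))).continuousWithinAt)
    (fun t ht => Real.hasDerivAt_rpow_const (Or.inl (ne_of_gt (lt_trans ha ht.1))))
  have hc0 : 0 < c := lt_trans ha hc.1
  have hba : 0 < b - a := sub_pos.mpr hab
  have heq : a ^ (-β) - b ^ (-β) = β * c ^ (-β - 1) * (b - a) := by
    have h := hderiv
    field_simp at h
    nlinarith [h]
  rw [heq]
  have hcle : c ^ (-β - 1) ≤ a ^ (-β - 1) :=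
    Real.rpow_le_rpow_of_nonpos ha (le_of_lt hc.1) (by linarith)
  nlinarith [mul_le_mul_of_nonneg_left hcle (by positivity : (0:ℝ) ≤ β * (b - a))]

/-- First part of Lemma 5.1: bound on the Laplacian of `ζ_β`. -/
theorem laplacian_zeta_bound {G : Type*} (μ : G → ℝ) (ω d : G → G → ℝ)
    (hμ : ∀ x, 0 < μ x) (hω_nonneg : ∀ x y, 0 ≤ ω x y)
    (hω_symm : ∀ x y, ω x y = ω y x) (hω_diag : ∀ x, ω x x = 0)
    (hloc : ∀ x, {y | ω x y ≠ 0}.Finite)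
    (hd_nonneg : ∀ x y, 0 ≤ d x y) (hd_self : ∀ x, d x x = 0)
    (hd_symm : ∀ x y, d x y = d y x)
    (hd_tri : ∀ x y z, d x y ≤ d x z + d z y)
    (s : ℝ) (hjump : ∀ x y, 0 < ω x y → d x y ≤ s)
    (C₀ : ℝ) (hC₀ : 0 < C₀) (h1intr : ∀ x, ∑' y, ω x y * d x y ≤ C₀ * μ x)
    (x₀ : G) (β k : ℝ) (hβ : 0 < β) (hk : s < k) (x : G) :
    graphLap μ ω (fun z => (d z x₀ + k) ^ (-β)) x
      ≤ C₀ * β * (d x x₀ + k - s) ^ (-β - 1) := by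
  classical
  set B : ℝ := d x x₀ + k with hBdef
  have hBs : 0 < B - s := by
    have := hd_nonneg x x₀; simp only [hBdef]; linarith
  set M : ℝ := β * (B - s) ^ (-β - 1) with hMdef
  have hMpos : 0 < M := mul_pos hβ (Real.rpow_pos_of_pos hBs _)
  set F : G → ℝ := fun y => ω x y * ((d y x₀ + k) ^ (-β) - B ^ (-β)) with hFdef
  set Gf : G → ℝ := fun y => ω x y * d x y * M with hGdef
  -- pointwise bound
  have hFG : ∀ y, F y ≤ Gf y := by
    intro y
    rcases eq_or_lt_of_le (hω_nonneg x y) with hω | hω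
    · simp [hFdef, hGdef, ← hω]
    · have hdxy : d x y ≤ s := hjump x y hω
      have hs0 : 0 ≤ s := le_trans (hd_nonneg x y) hdxy
      set A : ℝ := d y x₀ + k with hAdef
      have hA0 : 0 < A := by have := hd_nonneg y x₀; simp only [hAdef]; linarith
      have hB0 : 0 < B := by have := hd_nonneg x x₀; simp only [hBdef]; linarith
      have hBA : B - A ≤ d x y := by
        have := hd_tri x x₀ y
        have h2 := hd_symm y x₀
        simp only [hBdef, hAdef]
        rw [hd_symm x y] at *
        linarith [hd_tri x x₀ y, hd_symm x y ▸ le_refl (d x y)]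
      have hsA : B - s ≤ A := by linarith
      have key : A ^ (-β) - B ^ (-β) ≤ d x y * M := by
        rcases le_or_gt B A with h | h
        · have h1 : A ^ (-β) ≤ B ^ (-β) :=
            Real.rpow_le_rpow_of_nonpos hB0 h (neg_nonpos.mpr hβ.le)
          have h2 : 0 ≤ d x y * M := mul_nonneg (hd_nonneg x y) hMpos.le
          linarith
        · have h1 := rpow_neg_sub_le β hβ hA0 h
          have h2 : A ^ (-β - 1) ≤ (B - s) ^ (-β - 1) :=
            Real.rpow_le_rpow_of_nonpos hBs hsA (by linarith)
          have h3 : 0 < B - A := sub_pos.mpr h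
          have h4 : 0 ≤ (B - s) ^ (-β - 1) := Real.rpow_nonneg hBs.le _
          have h5 : β * A ^ (-β - 1) * (B - A) ≤ β * (B - s) ^ (-β - 1) * (d x y) := by
            have h6 : 0 ≤ A ^ (-β - 1) := Real.rpow_nonneg hA0.le _
            nlinarith [mul_le_mul_of_nonneg_left h2 (mul_nonneg hβ.le h3.le),
              mul_le_mul_of_nonneg_left hBA (mul_nonneg hβ.le h4)]
          simp only [hMdef]
          nlinarith
      calc F y = ω x y * (A ^ (-β) - B ^ (-β)) := rfl
        _ ≤ ω x y * (d x y * M) := mul_le_mul_of_nonneg_left key hω.le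
        _ = Gf y := by simp [hGdef]; ring
  -- summability
  have hsupp := hloc x
  have hSG : Summable Gf := by
    apply summable_of_ne_finset_zero (s := hsupp.toFinset)
    intro y hy
    simp only [Set.Finite.mem_toFinset, Set.mem_setOf_eq, not_not] at hy
    simp [hGdef, hy]
  have hSF : Summable F := by
    apply summable_of_ne_finset_zero (s := hsupp.toFinset)
    intro y hy
    simp only [Set.Finite.mem_toFinset, Set.mem_setOf_eq, not_not] at hy
    simp [hFdef, hy]
  have hSωd : ∑' y, Gf y = (∑' y, ω x y * d x y) * M := by
    simp only [hGdef]
    exact tsum_mul_right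
  have htsum : ∑' y, F y ≤ C₀ * μ x * M := by
    calc ∑' y, F y ≤ ∑' y, Gf y := Summable.tsum_le_tsum hFG hSF hSG
      _ = (∑' y, ω x y * d x y) * M := hSωd
      _ ≤ C₀ * μ x * M := mul_le_mul_of_nonneg_right (h1intr x) hMpos.le
  have hμx := hμ x
  have : graphLap μ ω (fun z => (d z x₀ + k) ^ (-β)) x ≤ (μ x)⁻¹ * (C₀ * μ x * M) := by
    unfold graphLap
    exact mul_le_mul_of_nonneg_left htsum (inv_nonneg.mpr hμx.le)
  calc graphLap μ ω (fun z => (d z x₀ + k) ^ (-β)) x ≤ (μ x)⁻¹ * (C₀ * μ x * M) := this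
    _ = C₀ * β * (B - s) ^ (-β - 1) := by field_simp [hMdef]; ring
end

section
/- Let (G, μ, ω) be an infinite, connected, locally finite weighted graph, and d an intrinsic pseudo metric with finite jump size s such that all balls B_r(x) are finite. Let V : G → ℝ satisfy V(x) ≥ c₀[d(x,x₀)+k]^(-α) for some c₀ > 0, k > s, 0 < α ≤ 2. Let u : G → ℝ satisfy Δu = Vu on G and Σ_x |u(x)|^p [d(x,x₀)+k]^(-β) μ(x) < ∞ for some β > 0 and p ≥ 2 with p ≥ (β²/(2c₀)) (k^(β+1)/(k-s)^(β+1))². Then u ≡ 0 on G. -/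
/-!
Test the equation `Δu = Vu` against `|u|^(p-2) u P²`, where `P = max(D,1)^(-β/2) η_R(D)`,
`D = d(·,x₀) + k`, and `η_R` is a cutoff equal to `1` on `{D ≤ R}` and `0` on `{D ≥ 2R}`.
The pointwise inequality `p|a|^(p-2) a (b-a) ≤ |b|^p - |a|^p - (|b|^(p/2) - |a|^(p/2))²` and
symmetrization of the double sum give `p ∑ μV|u|^p P² ≤ ∑ ω(x,y) |u(x)|^p (P(x) - P(y))²`, and
the intrinsic metric bounds the right side by `∑ μ|u|^p` times the squared local slope of `P`.
Along an edge `D` changes by at most `s`, so `D(y) ≥ ((k-s)/k) D(x)`; with `V ≥ c₀ D^(-α)` and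
`α ≤ 2` this yields `p c₀ S_R ≤ θ S + O(R⁻²)` for `S = ∑ μ|u|^p D^(-α) max(D,1)^(-β)`, its
truncation `S_R` to `{D ≤ R}`, and `θ = (β²/2) ((k-s)/k)^(-β-2)`. The bound on `p` says `θ < p c₀`
(strictly, because an infinite connected graph with finite balls has `s > 0`), so `S = 0`.
-/

open Real Filter Topology

lemma rpow_add_mul_rpow_sub_one_mul_sub_le {a b q : ℝ} (ha : 0 < a) (hb : 0 ≤ b) (hq : 1 ≤ q) :
    a ^ q + q * a ^ (q - 1) * (b - a) ≤ b ^ q := by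
  have hbern := one_add_mul_self_le_rpow_one_add (s := b / a - 1)
    (by linarith [div_nonneg hb ha.le]) hq
  rw [add_sub_cancel, div_rpow hb ha.le, le_div_iff₀ (rpow_pos_of_pos ha q)] at hbern
  have hq1 : a ^ q = a ^ (q - 1) * a := by rw [← rpow_add_one ha.ne', sub_add_cancel]
  calc a ^ q + q * a ^ (q - 1) * (b - a) = (1 + q * (b / a - 1)) * a ^ q := by
        rw [hq1]; field_simp
    _ ≤ b ^ q := hbern

lemma rpow_neg_sub_rpow_neg_le {γ a b : ℝ} (hγ : 0 < γ) (ha : 0 < a) (hab : a ≤ b) :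
    a ^ (-γ) - b ^ (-γ) ≤ γ * a ^ (-γ - 1) * (b - a) := by
  have hb : 0 < b := ha.trans_le hab
  have hbern := rpow_add_mul_rpow_sub_one_mul_sub_le hb ha.le (by linarith : 1 ≤ γ + 1)
  rw [add_sub_cancel_right] at hbern
  have hA : a ^ (γ + 1) * a ^ (-γ - 1) = 1 := by rw [← rpow_add ha]; norm_num
  have hB : b ^ γ * b ^ (-γ) = 1 := by rw [← rpow_add hb]; norm_num
  have ha' : a ^ (-γ) = a * a ^ (-γ - 1) := by rw [← rpow_one_add' ha.le (by linarith)]; ring_nf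
  have hb' : b ^ (γ + 1) = b ^ γ * b := rpow_add_one hb.ne' γ
  have hpos : 0 ≤ a ^ (-γ - 1) * b ^ (-γ) := by positivity
  calc a ^ (-γ) - b ^ (-γ)
      = a ^ (-γ - 1) * (b ^ (γ + 1) + (γ + 1) * b ^ γ * (a - b)) * b ^ (-γ) - b ^ (-γ)
        + γ * a ^ (-γ - 1) * (b - a) := by
        rw [ha', hb']; linear_combination (-a ^ (-γ - 1) * (b + (γ + 1) * (a - b))) * hB
    _ ≤ a ^ (-γ - 1) * a ^ (γ + 1) * b ^ (-γ) - b ^ (-γ) + γ * a ^ (-γ - 1) * (b - a) := by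
        nlinarith [mul_le_mul_of_nonneg_left hbern hpos]
    _ = γ * a ^ (-γ - 1) * (b - a) := by rw [mul_comm _ (a ^ _), hA]; ring

lemma abs_rpow_neg_sub_rpow_neg_le {γ a b : ℝ} (hγ : 0 < γ) (ha : 0 < a) (hb : 0 < b) :
    |a ^ (-γ) - b ^ (-γ)| ≤ γ * min a b ^ (-γ - 1) * |a - b| := by
  wlog hab : a ≤ b generalizing a b
  · simpa only [min_comm, abs_sub_comm] using this hb ha (le_of_not_ge hab)
  rw [min_eq_left hab, abs_sub_comm a, abs_of_nonneg (sub_nonneg.2 hab),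
    abs_of_nonneg (sub_nonneg.2 (rpow_le_rpow_of_nonpos ha hab (by linarith)))]
  exact rpow_neg_sub_rpow_neg_le hγ ha hab

lemma sq_rpow_div_two {x : ℝ} (hx : 0 ≤ x) (p : ℝ) : (x ^ (p / 2)) ^ 2 = x ^ p := by
  rw [← rpow_mul_natCast hx]; norm_num

lemma mul_rpow_sub_one_mul_sub_le {p x y : ℝ} (hp : 2 ≤ p) (hx : 0 ≤ x) (hy : 0 ≤ y) :
    p * x ^ (p - 1) * (y - x) ≤ 2 * x ^ (p / 2) * y ^ (p / 2) - 2 * x ^ p := by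
  rcases hx.eq_or_lt with rfl | hx
  · simp [zero_rpow (by linarith : p - 1 ≠ 0), zero_rpow (by linarith : p / 2 ≠ 0),
      zero_rpow (by linarith : p ≠ 0)]
  have hbern := rpow_add_mul_rpow_sub_one_mul_sub_le hx hy (by linarith : 1 ≤ p / 2)
  have h1 : x ^ (p / 2) * x ^ (p / 2) = x ^ p := by rw [← rpow_add hx]; ring_nf
  have h2 : x ^ (p / 2) * x ^ (p / 2 - 1) = x ^ (p - 1) := by rw [← rpow_add hx]; ring_nf
  calc p * x ^ (p - 1) * (y - x)
      = 2 * x ^ (p / 2) * (x ^ (p / 2) + p / 2 * x ^ (p / 2 - 1) * (y - x)) - 2 * x ^ p := by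
        rw [← h1, ← h2]; ring
    _ ≤ 2 * x ^ (p / 2) * y ^ (p / 2) - 2 * x ^ p := by gcongr

lemma mul_abs_rpow_mul_sub_le {p : ℝ} (hp : 2 ≤ p) (a b : ℝ) :
    p * (|a| ^ (p - 2) * a * (b - a))
      ≤ (|b| ^ p - |a| ^ p) - (|b| ^ (p / 2) - |a| ^ (p / 2)) ^ 2 := by
  have hsub : |a| ^ (p - 2) * |a| = |a| ^ (p - 1) := by
    rw [← rpow_add_one' (abs_nonneg a) (by linarith)]; ring_nf
  have hab : a * (b - a) ≤ |a| * (|b| - |a|) := by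
    nlinarith [abs_mul_abs_self a, le_abs_self (a * b), abs_mul a b]
  calc p * (|a| ^ (p - 2) * a * (b - a))
      = p * |a| ^ (p - 2) * (a * (b - a)) := by ring
    _ ≤ p * |a| ^ (p - 2) * (|a| * (|b| - |a|)) := by gcongr
    _ = p * |a| ^ (p - 1) * (|b| - |a|) := by rw [← hsub]; ring
    _ ≤ 2 * |a| ^ (p / 2) * |b| ^ (p / 2) - 2 * |a| ^ p :=
        mul_rpow_sub_one_mul_sub_le hp (abs_nonneg a) (abs_nonneg b)
    _ = (|b| ^ p - |a| ^ p) - (|b| ^ (p / 2) - |a| ^ (p / 2)) ^ 2 := by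
        rw [sub_sq, sq_rpow_div_two (abs_nonneg a), sq_rpow_div_two (abs_nonneg b)]; ring

lemma sq_sub_sq_sub_sq_mul_sq_add_le (a b X Y : ℝ) :
    ((b ^ 2 - a ^ 2) - (b - a) ^ 2) * X ^ 2 + ((a ^ 2 - b ^ 2) - (b - a) ^ 2) * Y ^ 2
      ≤ (a ^ 2 + b ^ 2) * (X - Y) ^ 2 := by
  nlinarith [sq_nonneg (a * X - b * Y), sq_nonneg (a * Y - b * X), sq_nonneg ((a - b) * (X + Y)),
    sq_nonneg ((a + b) * (X - Y)), sq_nonneg ((a - b) * (X - Y))]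

/-- Truncating at `1` is what makes `max t 1 ^ (-2) ≤ t ^ (-α)` hold for `α ≤ 2`
(`max_one_rpow_neg_sub_two_le`). -/
noncomputable def cutoffWeight (β R t : ℝ) : ℝ :=
  max t 1 ^ (-(β / 2)) * Set.projIcc (0 : ℝ) 1 zero_le_one (2 - t / R)

noncomputable def cutoffWeightLipSq (β R c t : ℝ) : ℝ :=
  β ^ 2 / 2 * (c * max t 1) ^ (-β - 2) + 2 * (c * max t 1) ^ (-β) / R ^ 2

lemma cutoffWeight_sq_of_le {β R t : ℝ} (hR : 0 < R) (ht : t ≤ R) :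
    cutoffWeight β R t ^ 2 = max t 1 ^ (-β) := by
  rw [cutoffWeight, Set.projIcc_of_right_le _ (by rw [le_sub_comm, div_le_iff₀ hR]; linarith),
    mul_one, ← rpow_mul_natCast (by positivity)]
  norm_num

lemma cutoffWeight_eq_zero_of_le {β R t : ℝ} (hR : 0 < R) (ht : 2 * R ≤ t) :
    cutoffWeight β R t = 0 := by
  rw [cutoffWeight, Set.projIcc_of_le_left _ (by rw [sub_nonpos, le_div_iff₀ hR]; linarith),
    mul_zero]

lemma sq_cutoffWeight_sub_le {β R c t t' r : ℝ} (hβ : 0 < β) (hR : 0 < R) (hc : 0 < c)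
    (hc1 : c ≤ 1) (htt' : c * t ≤ t') (hr : |t - t'| ≤ r) :
    (cutoffWeight β R t - cutoffWeight β R t') ^ 2 ≤ cutoffWeightLipSq β R c t * r ^ 2 := by
  rw [cutoffWeightLipSq]
  set m := c * max t 1
  set η : ℝ → ℝ := fun t => Set.projIcc (0 : ℝ) 1 zero_le_one (2 - t / R)
  have hm : 0 < m := by positivity
  have hmt : m ≤ max t 1 := mul_le_of_le_one_left (by positivity) hc1
  have hmt' : m ≤ max t' 1 := by
    rw [show m = c * max t 1 from rfl, mul_max_of_nonneg _ _ hc.le, mul_one]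
    exact max_le_max htt' hc1
  have hη : |η t - η t'| ≤ r / R := by
    refine (Set.abs_projIcc_sub_projIcc _).trans ?_
    rw [sub_sub_sub_cancel_left, ← sub_div, abs_div, abs_of_pos hR, abs_sub_comm]
    gcongr
  have hη' : |η t'| ≤ 1 :=
    abs_le.2 ⟨by linarith [(Set.projIcc 0 1 zero_le_one (2 - t' / R)).2.1],
      (Set.projIcc 0 1 zero_le_one (2 - t' / R)).2.2⟩
  have hr0 : 0 ≤ r := (abs_nonneg _).trans hr
  have hdecay :
      |max t 1 ^ (-(β / 2)) - max t' 1 ^ (-(β / 2))| ≤ β / 2 * m ^ (-(β / 2) - 1) * r :=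
    (abs_rpow_neg_sub_rpow_neg_le (by positivity) (by positivity) (by positivity)).trans <|
      mul_le_mul (mul_le_mul_of_nonneg_left
        (rpow_le_rpow_of_nonpos hm (le_min hmt hmt') (by linarith)) (by positivity))
        ((abs_max_sub_max_le_abs t t' 1).trans hr) (abs_nonneg _) (by positivity)
  have hQ : max t 1 ^ (-(β / 2)) ≤ m ^ (-(β / 2)) := rpow_le_rpow_of_nonpos hm hmt (by linarith)
  have hbound : |cutoffWeight β R t - cutoffWeight β R t'|
      ≤ m ^ (-(β / 2)) * (r / R) + β / 2 * m ^ (-(β / 2) - 1) * r := by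
    calc |cutoffWeight β R t - cutoffWeight β R t'|
        = |max t 1 ^ (-(β / 2)) * (η t - η t')
            + (max t 1 ^ (-(β / 2)) - max t' 1 ^ (-(β / 2))) * η t'| := by
          simp only [cutoffWeight, η]; ring_nf
      _ ≤ m ^ (-(β / 2)) * (r / R) + β / 2 * m ^ (-(β / 2) - 1) * r * 1 := by
          refine (abs_add_le _ _).trans ?_
          rw [abs_mul, abs_mul, abs_of_pos (by positivity : 0 < max t 1 ^ (-(β / 2)))]
          gcongr
      _ = m ^ (-(β / 2)) * (r / R) + β / 2 * m ^ (-(β / 2) - 1) * r := by ring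
  have hsq₁ : (m ^ (-(β / 2))) ^ 2 = m ^ (-β) := by rw [← rpow_mul_natCast hm.le]; ring_nf
  have hsq₂ : (m ^ (-(β / 2) - 1)) ^ 2 = m ^ (-β - 2) := by
    rw [← rpow_mul_natCast hm.le]; ring_nf
  calc (cutoffWeight β R t - cutoffWeight β R t') ^ 2
      ≤ (m ^ (-(β / 2)) * (r / R) + β / 2 * m ^ (-(β / 2) - 1) * r) ^ 2 := by
        rw [← sq_abs]; gcongr
    _ ≤ 2 * (m ^ (-(β / 2)) * (r / R)) ^ 2 + 2 * (β / 2 * m ^ (-(β / 2) - 1) * r) ^ 2 := by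
        nlinarith [sq_nonneg (m ^ (-(β / 2)) * (r / R) - β / 2 * m ^ (-(β / 2) - 1) * r)]
    _ = 2 * (m ^ (-(β / 2))) ^ 2 * (r / R) ^ 2
          + β ^ 2 / 2 * (m ^ (-(β / 2) - 1)) ^ 2 * r ^ 2 := by ring
    _ = (β ^ 2 / 2 * m ^ (-β - 2) + 2 * m ^ (-β) / R ^ 2) * r ^ 2 := by
        rw [hsq₁, hsq₂]; field_simp; ring

lemma max_one_rpow_neg_sub_two_le {α β t : ℝ} (ht : 0 < t) (hα0 : 0 ≤ α) (hα : α ≤ 2) :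
    max t 1 ^ (-β - 2) ≤ t ^ (-α) * max t 1 ^ (-β) := by
  have hQ : 0 < max t 1 := by positivity
  rw [sub_eq_add_neg, add_comm, rpow_add hQ]
  gcongr
  calc max t 1 ^ (-2 : ℝ) ≤ max t 1 ^ (-α) :=
        rpow_le_rpow_of_exponent_le (le_max_right t 1) (by linarith)
    _ ≤ t ^ (-α) := rpow_le_rpow_of_nonpos ht (le_max_left t 1) (by linarith)

lemma cutoffWeightLipSq_le {α β c t R : ℝ} (hc : 0 < c) (ht : 0 < t) (hα0 : 0 ≤ α)
    (hα : α ≤ 2) :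
    cutoffWeightLipSq β R c t
      ≤ β ^ 2 / 2 * c ^ (-β - 2) * (t ^ (-α) * max t 1 ^ (-β))
        + 2 * c ^ (-β) / R ^ 2 * max t 1 ^ (-β) := by
  rw [cutoffWeightLipSq, mul_rpow hc.le (by positivity), mul_rpow hc.le (by positivity)]
  calc β ^ 2 / 2 * (c ^ (-β - 2) * max t 1 ^ (-β - 2)) + 2 * (c ^ (-β) * max t 1 ^ (-β)) / R ^ 2
      = β ^ 2 / 2 * c ^ (-β - 2) * max t 1 ^ (-β - 2)
        + 2 * c ^ (-β) / R ^ 2 * max t 1 ^ (-β) := by ring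
    _ ≤ _ := by gcongr; exact max_one_rpow_neg_sub_two_le ht hα0 hα

lemma half_sq_mul_rpow_lt {s k β c₀ p : ℝ} (hs : 0 < s) (hsk : s < k) (hβ : 0 < β)
    (hc₀ : 0 < c₀) (hp : p ≥ β ^ 2 / (2 * c₀) * (k ^ (β + 1) / (k - s) ^ (β + 1)) ^ 2) :
    β ^ 2 / 2 * ((k - s) / k) ^ (-β - 2) < p * c₀ := by
  have hk : 0 < k := hs.trans hsk
  have hc : 0 < (k - s) / k := div_pos (by linarith) hk
  have hc1 : (k - s) / k < 1 := (div_lt_one hk).2 (by linarith)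
  have hratio : (k ^ (β + 1) / (k - s) ^ (β + 1)) ^ 2 = ((k - s) / k) ^ (-2 * β - 2) := by
    rw [← div_rpow hk.le (by linarith), ← inv_div, ← rpow_neg_one, ← rpow_mul hc.le,
      ← rpow_mul_natCast (by positivity)]
    ring_nf
  calc β ^ 2 / 2 * ((k - s) / k) ^ (-β - 2) < β ^ 2 / 2 * ((k - s) / k) ^ (-2 * β - 2) := by
        gcongr
        exact rpow_lt_rpow_of_exponent_gt hc hc1 (by linarith)
    _ ≤ p * c₀ := by
        rw [← hratio]
        calc β ^ 2 / 2 * (k ^ (β + 1) / (k - s) ^ (β + 1)) ^ 2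
            = β ^ 2 / (2 * c₀) * (k ^ (β + 1) / (k - s) ^ (β + 1)) ^ 2 * c₀ := by field_simp
          _ ≤ p * c₀ := mul_le_mul_of_nonneg_right hp hc₀.le

lemma le_of_forall_le_add_div_sq {a b K : ℝ} (R₀ : ℝ) (h : ∀ R ≥ R₀, a ≤ b + K / R ^ 2) :
    a ≤ b := by
  refine ge_of_tendsto ?_ ((eventually_ge_atTop R₀).mono h)
  have hK : Tendsto (fun R : ℝ => K / R ^ 2) atTop (𝓝 0) :=
    tendsto_const_nhds.div_atTop (tendsto_pow_atTop two_ne_zero)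
  simpa using tendsto_const_nhds.add hK

lemma eq_zero_of_forall_sum_le {ι : Type*} {T : ι → ℝ} {A θ : ℝ} (hT0 : ∀ x, 0 ≤ T x)
    (hT : Summable T) (hθ : θ < A) (h : ∀ F : Finset ι, A * ∑ x ∈ F, T x ≤ θ * ∑' x, T x)
    (x : ι) : T x = 0 := by
  have htsum : A * ∑' x, T x ≤ θ * ∑' x, T x := by
    rw [← tsum_mul_left]
    exact (hT.mul_left A).tsum_le_of_sum_le fun F => by rw [← Finset.mul_sum]; exact h F
  have hle : ∑' x, T x ≤ 0 := by nlinarith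
  exact le_antisymm ((hT.le_tsum x fun y _ => hT0 y).trans hle) (hT0 x)

section WeightedGraph

variable {G : Type*} {μ : G → ℝ} {ω d : G → G → ℝ}

lemma jump_pos [Infinite G] {s : ℝ}
    (hconn : ∀ x y : G, Relation.ReflTransGen (fun a b => 0 < ω a b) x y)
    (hd_nonneg : ∀ x y, 0 ≤ d x y) (hd_self : ∀ x, d x x = 0)
    (hd_tri : ∀ x y z, d x y ≤ d x z + d z y) (hjump : ∀ x y, 0 < ω x y → d x y ≤ s)
    (hballs : ∀ (x : G) (r : ℝ), {y | d x y < r}.Finite) : 0 < s := by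
  by_contra! hs
  obtain ⟨x₀⟩ := (inferInstance : Nonempty G)
  have hzero : ∀ y, d x₀ y = 0 := fun y => by
    induction hconn x₀ y with
    | refl => exact hd_self x₀
    | @tail b c _ hbc ih =>
      exact le_antisymm (by linarith [hd_tri x₀ c b, hjump b c hbc]) (hd_nonneg x₀ c)
  exact Set.infinite_univ ((hballs x₀ 1).subset fun y _ => by simp [hzero y])

lemma sum_sum_mul_swap_of_symm (hω : ∀ x y, ω x y = ω y x) (B : Finset G) (F : G → G → ℝ) :
    ∑ x ∈ B, ∑ y ∈ B, ω x y * F y x = ∑ x ∈ B, ∑ y ∈ B, ω x y * F x y := by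
  rw [Finset.sum_comm]; simp_rw [hω]

lemma sum_sum_sq_sub_mul_sq_le (hω_nonneg : ∀ x y, 0 ≤ ω x y) (hω_symm : ∀ x y, ω x y = ω y x)
    (B : Finset G) (f P : G → ℝ) :
    ∑ x ∈ B, ∑ y ∈ B, ω x y * (((f y ^ 2 - f x ^ 2) - (f y - f x) ^ 2) * P x ^ 2)
      ≤ ∑ x ∈ B, ∑ y ∈ B, ω x y * (f x ^ 2 * (P x - P y) ^ 2) := by
  have hswap := sum_sum_mul_swap_of_symm hω_symm B
  have hedge : ∀ x y, ω x y * (((f y ^ 2 - f x ^ 2) - (f y - f x) ^ 2) * P x ^ 2)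
      + ω x y * (((f x ^ 2 - f y ^ 2) - (f x - f y) ^ 2) * P y ^ 2)
      ≤ ω x y * (f x ^ 2 * (P x - P y) ^ 2) + ω x y * (f y ^ 2 * (P y - P x) ^ 2) := by
    intro x y
    have := mul_le_mul_of_nonneg_left (sq_sub_sq_sub_sq_mul_sq_add_le (f x) (f y) (P x) (P y))
      (hω_nonneg x y)
    linear_combination this
  have hsum := Finset.sum_le_sum fun x (_ : x ∈ B) =>
    Finset.sum_le_sum fun y (_ : y ∈ B) => hedge x y
  have h₁ := hswap fun a b => ((f b ^ 2 - f a ^ 2) - (f b - f a) ^ 2) * P a ^ 2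
  have h₂ := hswap fun a b => f a ^ 2 * (P a - P b) ^ 2
  simp only [Finset.sum_add_distrib] at hsum
  beta_reduce at h₁ h₂
  linarith

lemma mul_graphLap_eq_sum {x : G} (hμ : μ x ≠ 0) {B : Finset G} (hB : ∀ y, ω x y ≠ 0 → y ∈ B)
    (u : G → ℝ) :
    μ x * graphLap μ ω u x = ∑ y ∈ B, ω x y * (u y - u x) := by
  rw [graphLap, mul_inv_cancel_left₀ hμ]
  exact tsum_eq_sum fun y hy => by rw [not_imp_comm.1 (hB y) hy, zero_mul]

lemma abs_rpow_eq_abs_rpow_sub_two_mul_mul {p : ℝ} (hp : p ≠ 0) (a : ℝ) :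
    |a| ^ p = |a| ^ (p - 2) * a * a := by
  rw [mul_assoc, ← sq, ← sq_abs, ← rpow_two, ← rpow_add' (abs_nonneg a) (by simpa using hp),
    sub_add_cancel]

lemma mul_sum_potential_le_sum_sum {p : ℝ} (hp : 2 ≤ p) (hμ : ∀ x, 0 < μ x)
    (hω_nonneg : ∀ x y, 0 ≤ ω x y) (hω_symm : ∀ x y, ω x y = ω y x) {V u : G → ℝ}
    (hu : ∀ x, graphLap μ ω u x = V x * u x) (P : G → ℝ) {B : Finset G}
    (hB : ∀ x ∈ B, P x ≠ 0 → ∀ y, ω x y ≠ 0 → y ∈ B) :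
    p * ∑ x ∈ B, μ x * V x * |u x| ^ p * P x ^ 2
      ≤ ∑ x ∈ B, ∑ y ∈ B, ω x y * (|u x| ^ p * (P x - P y) ^ 2) := by
  set f : G → ℝ := fun x => |u x| ^ (p / 2)
  have hf : ∀ x, f x ^ 2 = |u x| ^ p := fun x => sq_rpow_div_two (abs_nonneg _) p
  have hx : ∀ x ∈ B, p * (μ x * V x * |u x| ^ p * P x ^ 2)
      ≤ ∑ y ∈ B, ω x y * (((f y ^ 2 - f x ^ 2) - (f y - f x) ^ 2) * P x ^ 2) := by
    intro x hxB
    by_cases hPx : P x = 0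
    · simp [hPx]
    have heq : μ x * V x * u x = ∑ y ∈ B, ω x y * (u y - u x) := by
      rw [← mul_graphLap_eq_sum (hμ x).ne' (hB x hxB hPx), hu x, mul_assoc]
    calc p * (μ x * V x * |u x| ^ p * P x ^ 2)
        = p * |u x| ^ (p - 2) * u x * P x ^ 2 * (μ x * V x * u x) := by
          rw [abs_rpow_eq_abs_rpow_sub_two_mul_mul (by linarith) (u x)]; ring
      _ = ∑ y ∈ B, ω x y * (p * (|u x| ^ (p - 2) * u x * (u y - u x)) * P x ^ 2) := by
          rw [heq, Finset.mul_sum]; exact Finset.sum_congr rfl fun y _ => by ring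
      _ ≤ ∑ y ∈ B, ω x y * (((f y ^ 2 - f x ^ 2) - (f y - f x) ^ 2) * P x ^ 2) := by
          gcongr with y
          · exact hω_nonneg x y
          · rw [hf, hf]; exact mul_abs_rpow_mul_sub_le hp (u x) (u y)
  calc p * ∑ x ∈ B, μ x * V x * |u x| ^ p * P x ^ 2
      ≤ ∑ x ∈ B, ∑ y ∈ B, ω x y * (((f y ^ 2 - f x ^ 2) - (f y - f x) ^ 2) * P x ^ 2) := by
        rw [Finset.mul_sum]; exact Finset.sum_le_sum hx
    _ ≤ ∑ x ∈ B, ∑ y ∈ B, ω x y * (f x ^ 2 * (P x - P y) ^ 2) :=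
        sum_sum_sq_sub_mul_sq_le hω_nonneg hω_symm B f P
    _ = ∑ x ∈ B, ∑ y ∈ B, ω x y * (|u x| ^ p * (P x - P y) ^ 2) := by simp only [hf]

lemma sum_sum_mul_sq_sub_le (hω_nonneg : ∀ x y, 0 ≤ ω x y)
    (hloc : ∀ x, {y | ω x y ≠ 0}.Finite) (hintrinsic : ∀ x, ∑' y, ω x y * d x y ^ 2 ≤ μ x)
    {g C P : G → ℝ} (hg : ∀ x, 0 ≤ g x) (hC0 : ∀ x, 0 ≤ C x)
    (hC : ∀ x y, 0 < ω x y → (P x - P y) ^ 2 ≤ C x * d x y ^ 2) (B : Finset G) :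
    ∑ x ∈ B, ∑ y ∈ B, ω x y * (g x * (P x - P y) ^ 2) ≤ ∑ x ∈ B, g x * C x * μ x := by
  refine Finset.sum_le_sum fun x _ => ?_
  have hsummable : Summable fun y => ω x y * d x y ^ 2 :=
    summable_of_hasFiniteSupport <| (hloc x).subset fun y hy => left_ne_zero_of_mul hy
  calc ∑ y ∈ B, ω x y * (g x * (P x - P y) ^ 2)
      ≤ ∑ y ∈ B, g x * C x * (ω x y * d x y ^ 2) := by
        refine Finset.sum_le_sum fun y _ => ?_
        rcases (hω_nonneg x y).eq_or_lt with hω | hω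
        · simp [← hω]
        · calc ω x y * (g x * (P x - P y) ^ 2) ≤ ω x y * (g x * (C x * d x y ^ 2)) :=
                mul_le_mul_of_nonneg_left (mul_le_mul_of_nonneg_left (hC x y hω) (hg x)) hω.le
            _ = g x * C x * (ω x y * d x y ^ 2) := by ring
    _ = g x * C x * ∑ y ∈ B, ω x y * d x y ^ 2 := by rw [Finset.mul_sum]
    _ ≤ g x * C x * μ x := by
        have := mul_nonneg (hg x) (hC0 x)
        gcongr
        exact (hsummable.sum_le_tsum B fun y _ => by have := hω_nonneg x y; positivity).trans
          (hintrinsic x)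

lemma mul_sum_le_at_scale {D V u : G → ℝ} {s k c₀ α β p R : ℝ} (hμ : ∀ x, 0 < μ x)
    (hω_nonneg : ∀ x y, 0 ≤ ω x y) (hω_symm : ∀ x y, ω x y = ω y x)
    (hloc : ∀ x, {y | ω x y ≠ 0}.Finite) (hintrinsic : ∀ x, ∑' y, ω x y * d x y ^ 2 ≤ μ x)
    (hjump : ∀ x y, 0 < ω x y → d x y ≤ s) (hs : 0 ≤ s) (hsk : s < k)
    (hDk : ∀ x, k ≤ D x) (hD_lip : ∀ x y, |D x - D y| ≤ d x y)
    (hD_fin : ∀ r, {x | D x < r}.Finite) (hc₀ : 0 ≤ c₀) (hV : ∀ x, c₀ * D x ^ (-α) ≤ V x)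
    (hu : ∀ x, graphLap μ ω u x = V x * u x) (hp : 2 ≤ p) (hβ : 0 < β) (hα0 : 0 ≤ α)
    (hα : α ≤ 2) (hT : Summable fun x => μ x * |u x| ^ p * (D x ^ (-α) * max (D x) 1 ^ (-β)))
    (hU : Summable fun x => μ x * |u x| ^ p * max (D x) 1 ^ (-β))
    (hR : 0 < R) (F : Finset G) (hF : ∀ x ∈ F, D x ≤ R) :
    p * c₀ * ∑ x ∈ F, μ x * |u x| ^ p * (D x ^ (-α) * max (D x) 1 ^ (-β))
      ≤ β ^ 2 / 2 * ((k - s) / k) ^ (-β - 2)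
          * ∑' x, μ x * |u x| ^ p * (D x ^ (-α) * max (D x) 1 ^ (-β))
        + 2 * ((k - s) / k) ^ (-β) * (∑' x, μ x * |u x| ^ p * max (D x) 1 ^ (-β)) / R ^ 2 := by
  have hk : 0 < k := hs.trans_lt hsk
  have hD : ∀ x, 0 < D x := fun x => hk.trans_le (hDk x)
  set c := (k - s) / k
  have hc : 0 < c := div_pos (by linarith) hk
  have hc1 : c ≤ 1 := (div_le_one hk).2 (by linarith)
  set P : G → ℝ := fun x => cutoffWeight β R (D x)
  set B := (hD_fin (2 * R + s)).toFinset
  have hmemB : ∀ x, x ∈ B ↔ D x < 2 * R + s := fun x => (hD_fin _).mem_toFinset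
  have hneighbour : ∀ x y, 0 < ω x y → D y ≤ D x + s := fun x y hω => by
    linarith [(abs_le.1 (hD_lip x y)).1, hjump x y hω]
  have hB : ∀ x ∈ B, P x ≠ 0 → ∀ y, ω x y ≠ 0 → y ∈ B := by
    intro x _ hPx y hω
    have hDx : D x < 2 * R := not_le.1 fun h => hPx (cutoffWeight_eq_zero_of_le hR h)
    rw [hmemB]
    linarith [hneighbour x y ((hω_nonneg x y).lt_of_ne' hω)]
  have hedge : ∀ x y, 0 < ω x y →
      (P x - P y) ^ 2 ≤ cutoffWeightLipSq β R c (D x) * d x y ^ 2 := by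
    intro x y hω
    refine sq_cutoffWeight_sub_le hβ hR hc hc1 ?_ (hD_lip x y)
    have : s ≤ s * (D x / k) := le_mul_of_one_le_right hs ((one_le_div hk).2 (hDk x))
    calc c * D x = D x - s * (D x / k) := by simp only [c]; field_simp
      _ ≤ D y := by linarith [(abs_le.1 (hD_lip x y)).2, hjump x y hω]
  calc p * c₀ * ∑ x ∈ F, μ x * |u x| ^ p * (D x ^ (-α) * max (D x) 1 ^ (-β))
      = ∑ x ∈ F, p * (μ x * (c₀ * D x ^ (-α)) * |u x| ^ p * P x ^ 2) := by
        rw [Finset.mul_sum]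
        refine Finset.sum_congr rfl fun x hx => ?_
        rw [show P x ^ 2 = max (D x) 1 ^ (-β) from cutoffWeight_sq_of_le hR (hF x hx)]
        ring
    _ ≤ ∑ x ∈ F, p * (μ x * V x * |u x| ^ p * P x ^ 2) := by
        gcongr with x
        · have := hμ x; linarith
        · exact hV x
    _ ≤ ∑ x ∈ B, p * (μ x * V x * |u x| ^ p * P x ^ 2) := by
        refine Finset.sum_le_sum_of_subset_of_nonneg (fun x hx => ?_) fun x _ _ => ?_
        · rw [hmemB]; linarith [hF x hx]
        · have := hμ x; have := hD x
          have : 0 ≤ V x := (by positivity : 0 ≤ c₀ * D x ^ (-α)).trans (hV x)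
          positivity
    _ = p * ∑ x ∈ B, μ x * V x * |u x| ^ p * P x ^ 2 := by rw [Finset.mul_sum]
    _ ≤ ∑ x ∈ B, ∑ y ∈ B, ω x y * (|u x| ^ p * (P x - P y) ^ 2) :=
        mul_sum_potential_le_sum_sum hp hμ hω_nonneg hω_symm hu P hB
    _ ≤ ∑ x ∈ B, |u x| ^ p * cutoffWeightLipSq β R c (D x) * μ x :=
        sum_sum_mul_sq_sub_le hω_nonneg hloc hintrinsic (fun x => by positivity)
          (fun x => by rw [cutoffWeightLipSq]; positivity) hedge B
    _ ≤ ∑ x ∈ B, (β ^ 2 / 2 * c ^ (-β - 2)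
            * (μ x * |u x| ^ p * (D x ^ (-α) * max (D x) 1 ^ (-β)))
          + 2 * c ^ (-β) / R ^ 2 * (μ x * |u x| ^ p * max (D x) 1 ^ (-β))) := by
        refine Finset.sum_le_sum fun x _ => ?_
        have := mul_le_mul_of_nonneg_left (cutoffWeightLipSq_le (β := β) (R := R) hc (hD x) hα0 hα)
          (by have := hμ x; positivity : 0 ≤ μ x * |u x| ^ p)
        linarith
    _ ≤ _ := by
        rw [Finset.sum_add_distrib, ← Finset.mul_sum, ← Finset.mul_sum,
          mul_div_right_comm _ (∑' x, _)]
        gcongr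
        · exact hT.sum_le_tsum B fun x _ => by have := hμ x; have := hD x; positivity
        · exact hU.sum_le_tsum B fun x _ => by have := hμ x; have := hD x; positivity

lemma eq_zero_of_graphLap_eq_of_summable {D V u : G → ℝ} {s k c₀ α β p : ℝ}
    (hμ : ∀ x, 0 < μ x) (hω_nonneg : ∀ x y, 0 ≤ ω x y) (hω_symm : ∀ x y, ω x y = ω y x)
    (hloc : ∀ x, {y | ω x y ≠ 0}.Finite) (hintrinsic : ∀ x, ∑' y, ω x y * d x y ^ 2 ≤ μ x)
    (hjump : ∀ x y, 0 < ω x y → d x y ≤ s) (hs : 0 ≤ s) (hsk : s < k)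
    (hDk : ∀ x, k ≤ D x) (hD_lip : ∀ x y, |D x - D y| ≤ d x y)
    (hD_fin : ∀ r, {x | D x < r}.Finite) (hc₀ : 0 ≤ c₀) (hV : ∀ x, c₀ * D x ^ (-α) ≤ V x)
    (hu : ∀ x, graphLap μ ω u x = V x * u x) (hp : 2 ≤ p) (hβ : 0 < β) (hα0 : 0 ≤ α)
    (hα : α ≤ 2) (hθ : β ^ 2 / 2 * ((k - s) / k) ^ (-β - 2) < p * c₀)
    (husum : Summable fun x => |u x| ^ p * D x ^ (-β) * μ x) (x : G) : u x = 0 := by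
  have hk : 0 < k := hs.trans_lt hsk
  have hD : ∀ x, 0 < D x := fun x => hk.trans_le (hDk x)
  have hU : Summable fun x => μ x * |u x| ^ p * max (D x) 1 ^ (-β) :=
    husum.of_nonneg_of_le (fun x => by have := hμ x; positivity) fun x => calc
      μ x * |u x| ^ p * max (D x) 1 ^ (-β) ≤ μ x * |u x| ^ p * D x ^ (-β) :=
        mul_le_mul_of_nonneg_left (rpow_le_rpow_of_nonpos (hD x) (le_max_left _ _) (by linarith))
          (by have := hμ x; positivity)
      _ = |u x| ^ p * D x ^ (-β) * μ x := by ring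
  have hT : Summable fun x => μ x * |u x| ^ p * (D x ^ (-α) * max (D x) 1 ^ (-β)) :=
    (hU.mul_left (k ^ (-α))).of_nonneg_of_le (fun x => by have := hμ x; have := hD x; positivity)
      fun x => calc
        μ x * |u x| ^ p * (D x ^ (-α) * max (D x) 1 ^ (-β))
            = μ x * |u x| ^ p * max (D x) 1 ^ (-β) * D x ^ (-α) := by ring
        _ ≤ μ x * |u x| ^ p * max (D x) 1 ^ (-β) * k ^ (-α) :=
          mul_le_mul_of_nonneg_left (rpow_le_rpow_of_nonpos hk (hDk x) (by linarith))
            (by have := hμ x; have := hD x; positivity)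
        _ = k ^ (-α) * (μ x * |u x| ^ p * max (D x) 1 ^ (-β)) := by ring
  have hF : ∀ F : Finset G, p * c₀ * ∑ x ∈ F, μ x * |u x| ^ p * (D x ^ (-α) * max (D x) 1 ^ (-β))
      ≤ β ^ 2 / 2 * ((k - s) / k) ^ (-β - 2)
        * ∑' x, μ x * |u x| ^ p * (D x ^ (-α) * max (D x) 1 ^ (-β)) := fun F => by
    obtain ⟨M, hM⟩ := (F.image D).bddAbove
    exact le_of_forall_le_add_div_sq (max M 1) fun R hR =>
      mul_sum_le_at_scale hμ hω_nonneg hω_symm hloc hintrinsic hjump hs hsk hDk hD_lip hD_fin hc₀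
        hV hu hp hβ hα0 hα hT hU (by linarith [le_max_right M 1]) F fun x hx =>
          (hM (Finset.mem_coe.2 (Finset.mem_image_of_mem D hx))).trans ((le_max_left _ _).trans hR)
  by_contra hux
  have hpos : 0 < μ x * |u x| ^ p * (D x ^ (-α) * max (D x) 1 ^ (-β)) := by
    have := hμ x; have := hD x; have := abs_pos.2 hux; positivity
  exact hpos.ne' (eq_zero_of_forall_sum_le (fun x => by have := hμ x; have := hD x; positivity) hT
    hθ hF x)

end WeightedGraph

theorem uniqueness_p_ge_two_general {G : Type*} [Infinite G] (μ : G → ℝ) (ω d : G → G → ℝ)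
    (hμ : ∀ x, 0 < μ x) (hω_nonneg : ∀ x y, 0 ≤ ω x y)
    (hω_symm : ∀ x y, ω x y = ω y x)
    (hconn : ∀ x y : G, Relation.ReflTransGen (fun a b => 0 < ω a b) x y)
    (hloc : ∀ x, {y | ω x y ≠ 0}.Finite)
    (hd_nonneg : ∀ x y, 0 ≤ d x y) (hd_self : ∀ x, d x x = 0)
    (hd_symm : ∀ x y, d x y = d y x)
    (hd_tri : ∀ x y z, d x y ≤ d x z + d z y)
    (hintrinsic : ∀ x, ∑' y, ω x y * d x y ^ 2 ≤ μ x)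
    (s : ℝ) (hjump : ∀ x y, 0 < ω x y → d x y ≤ s)
    (hballs : ∀ (x : G) (r : ℝ), {y | d x y < r}.Finite)
    (x₀ : G) (V : G → ℝ) (c₀ k α : ℝ) (hc₀ : 0 < c₀) (hk : s < k)
    (hα0 : 0 < α) (hα : α ≤ 2)
    (hV : ∀ x, V x ≥ c₀ * (d x x₀ + k) ^ (-α))
    (u : G → ℝ) (hu : ∀ x, graphLap μ ω u x = V x * u x)
    (β p : ℝ) (hβ : 0 < β) (hp2 : 2 ≤ p)
    (hp : p ≥ β ^ 2 / (2 * c₀) * (k ^ (β + 1) / (k - s) ^ (β + 1)) ^ 2)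
    (husum : Summable (fun x => |u x| ^ p * (d x x₀ + k) ^ (-β) * μ x)) :
    ∀ x, u x = 0 := by
  have hs : 0 < s := jump_pos hconn hd_nonneg hd_self hd_tri hjump hballs
  have hD_lip : ∀ x y, |(d x x₀ + k) - (d y x₀ + k)| ≤ d x y := fun x y => abs_sub_le_iff.2
    ⟨by linarith [hd_tri x x₀ y], by linarith [hd_tri y x₀ x, hd_symm x y]⟩
  have hD_fin : ∀ r, {x | d x x₀ + k < r}.Finite := fun r =>
    (hballs x₀ (r - k)).subset fun x hx => by
      simp only [Set.mem_ofPred_eq] at hx ⊢; linarith [hd_symm x x₀]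
  exact eq_zero_of_graphLap_eq_of_summable hμ hω_nonneg hω_symm hloc hintrinsic hjump hs.le hk
    (fun x => le_add_of_nonneg_left (hd_nonneg x x₀)) hD_lip hD_fin hc₀.le hV hu hp2 hβ hα0.le hα
    (half_sq_mul_rpow_lt hs hk hβ hc₀ hp) husum

/-- Theorem 3.1: uniqueness in weighted `ℓ^p`, `p ≥ 2`, for the Schrödinger equation
`Δu = Vu` on an infinite weighted graph, with potential vanishing at infinity. -/
theorem uniqueness_p_ge_two {G : Type*} [Infinite G] (μ : G → ℝ) (ω d : G → G → ℝ)
    (hμ : ∀ x, 0 < μ x) (hω_nonneg : ∀ x y, 0 ≤ ω x y)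
    (hω_symm : ∀ x y, ω x y = ω y x) (hω_diag : ∀ x, ω x x = 0)
    (hω_sum : ∀ x, Summable (fun y => ω x y))
    (hconn : ∀ x y : G, Relation.ReflTransGen (fun a b => 0 < ω a b) x y)
    (hloc : ∀ x, {y | ω x y ≠ 0}.Finite)
    (hd_nonneg : ∀ x y, 0 ≤ d x y) (hd_self : ∀ x, d x x = 0)
    (hd_symm : ∀ x y, d x y = d y x)
    (hd_tri : ∀ x y z, d x y ≤ d x z + d z y)
    (hintrinsic : ∀ x, ∑' y, ω x y * d x y ^ 2 ≤ μ x)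
    (s : ℝ) (hjump : ∀ x y, 0 < ω x y → d x y ≤ s)
    (hballs : ∀ (x : G) (r : ℝ), {y | d x y < r}.Finite)
    (x₀ : G) (V : G → ℝ) (c₀ k α : ℝ) (hc₀ : 0 < c₀) (hk : s < k)
    (hα0 : 0 < α) (hα : α ≤ 2)
    (hV : ∀ x, V x ≥ c₀ * (d x x₀ + k) ^ (-α))
    (u : G → ℝ) (hu : ∀ x, graphLap μ ω u x = V x * u x)
    (β p : ℝ) (hβ : 0 < β) (hp2 : 2 ≤ p)
    (hp : p ≥ β ^ 2 / (2 * c₀) * (k ^ (β + 1) / (k - s) ^ (β + 1)) ^ 2)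
    (husum : Summable (fun x => |u x| ^ p * (d x x₀ + k) ^ (-β) * μ x)) :
    ∀ x, u x = 0 :=
  uniqueness_p_ge_two_general μ ω d hμ hω_nonneg hω_symm hconn hloc hd_nonneg hd_self hd_symm hd_tri
    hintrinsic s hjump hballs x₀ V c₀ k α hc₀ hk hα0 hα hV u hu β p hβ hp2 hp husum
end
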